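/- Let 1 ≤ p ≤ 2 and let f : ℂ → ℂ be holomorphic on the open right half-plane Π₊ = {z ∈ ℂ : 0 < Re z} with sup_{u>0} ∫_ℝ |f(u+iv)|^p dv < ∞. Then for every ε > 0, the shifted function f_ε(z) := f(ε + z) satisfies sup_{u>0} ∫_ℝ |f_ε(u+iv)|² dv < ∞. -/

import Mathlib

set_option maxHeartbeats 1000000

open MeasureTheory Set Real Metric
open scoped ENNReal NNReal

lemma circle_bound (f : ℂ → ℂ) (hf : DifferentiableOn ℂ f {z : ℂ | 0 < z.re})
    {c : ℂ} {R : ℝ} (hR : 0 < R) (hball : closedBall c R ⊆ {z : ℂ | 0 < z.re}) :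
    ENNReal.ofReal (2 * π * ‖f c‖) ≤ ∫⁻ θ in Ioo (-π) π, (‖f (circleMap c R θ)‖₊ : ℝ≥0∞) := by
  have hopen : IsOpen {z : ℂ | 0 < z.re} := isOpen_lt continuous_const Complex.continuous_re
  have hc : ContinuousOn f (closedBall c R) := hf.continuousOn.mono hball
  have hd : ∀ z ∈ ball c R \ (∅ : Set ℂ), DifferentiableAt ℂ f z := fun z hz =>
    hf.differentiableAt (hopen.mem_nhds (hball (ball_subset_closedBall hz.1)))
  have key := Complex.circleIntegral_sub_center_inv_smul_of_differentiable_on_off_countable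
    hR countable_empty hc hd
  set G : ℝ → ℝ := fun θ => ‖f (circleMap c R θ)‖ with hG
  have hGcont : Continuous G := by
    have : Continuous fun θ => f (circleMap c R θ) :=
      hc.comp_continuous (continuous_circleMap c R) (fun θ => circleMap_mem_closedBall c hR.le θ)
    exact this.norm
  have step1 : 2 * π * ‖f c‖ ≤ ∫ θ in (0:ℝ)..(2*π), G θ := by
    have h1 : ‖(2 * ↑π * Complex.I : ℂ) • f c‖ = 2 * π * ‖f c‖ := by
      rw [norm_smul]
      simp [Complex.norm_real, abs_of_pos Real.pi_pos, mul_assoc]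
    rw [← h1, ← key]
    have h2 : ‖∮ z in C(c, R), (z - c)⁻¹ • f z‖ ≤ ∫ θ in (0:ℝ)..(2*π), G θ := by
      refine le_trans (intervalIntegral.norm_integral_le_integral_norm (by positivity)) ?_
      apply le_of_eq
      refine intervalIntegral.integral_congr fun θ _ => ?_
      rw [norm_smul, norm_smul, deriv_circleMap, circleMap_sub_center]
      simp only [norm_mul, norm_circleMap_zero, Complex.norm_I, mul_one,
        norm_inv]
      rw [abs_of_pos hR]
      field_simp
      simp [hG]
    exact h2
  have hper : Function.Periodic G (2*π) := (periodic_circleMap c R).comp fun z => ‖f z‖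
  have step2 : ∫ θ in (0:ℝ)..(2*π), G θ = ∫ θ in (-π)..π, G θ := by
    have := hper.intervalIntegral_add_eq 0 (-π)
    rw [zero_add] at this
    rw [this, show -π + 2*π = π by ring]
  have step3 : ∫ θ in (-π)..π, G θ = ∫ θ in Ioc (-π) π, G θ :=
    intervalIntegral.integral_of_le (by linarith [Real.pi_pos])
  have step4 : ENNReal.ofReal (∫ θ in Ioc (-π) π, G θ)
      = ∫⁻ θ in Ioc (-π) π, (‖f (circleMap c R θ)‖₊ : ℝ≥0∞) := by
    rw [ofReal_integral_eq_lintegral_ofReal (hGcont.integrableOn_Ioc)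
      (Filter.Eventually.of_forall fun θ => norm_nonneg _)]
    refine lintegral_congr fun θ => ?_
    rw [hG, ofReal_norm, enorm_eq_nnnorm]
  have step5 : (∫⁻ θ in Ioc (-π) π, (‖f (circleMap c R θ)‖₊ : ℝ≥0∞))
      = ∫⁻ θ in Ioo (-π) π, (‖f (circleMap c R θ)‖₊ : ℝ≥0∞) :=
    (setLIntegral_congr (Ioo_ae_eq_Ioc)).symm
  calc ENNReal.ofReal (2 * π * ‖f c‖) ≤ ENNReal.ofReal (∫ θ in Ioc (-π) π, G θ) := by
        refine ENNReal.ofReal_le_ofReal ?_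
        rw [← step3, ← step2]; exact step1
    _ = _ := by rw [step4, step5]

lemma holder_one {α : Type*} [MeasurableSpace α] (μ : Measure α) {p : ℝ} (hp1 : 1 ≤ p)
    {h : α → ℝ≥0∞} (hm : AEMeasurable h μ) :
    ∫⁻ x, h x ∂μ ≤ (∫⁻ x, h x ^ p ∂μ) ^ (1/p) * (μ univ) ^ (1 - 1/p) := by
  rcases eq_or_lt_of_le hp1 with hp | hp
  · simp [← hp, ENNReal.rpow_one]
  · have hpq : p.HolderConjugate p.conjExponent := Real.HolderConjugate.conjExponent hp
    have := ENNReal.lintegral_mul_le_Lp_mul_Lq μ hpq hm aemeasurable_const (g := fun _ => 1)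
    simp only [Pi.mul_apply, mul_one, ENNReal.one_rpow, lintegral_one] at this
    refine le_trans this (le_of_eq ?_)
    congr 1
    have : 1 / p.conjExponent = 1 - 1/p := by
      have h2 := hpq.inv_add_inv_eq_one
      rw [one_div, one_div]
      linarith
    rw [this]

lemma pointwise_bound (p : ℝ) (hp1 : 1 ≤ p) (f : ℂ → ℂ)
    (hf : DifferentiableOn ℂ f {z : ℂ | 0 < z.re}) (S : ℝ≥0∞)
    (hline : ∀ u : ℝ, 0 < u →
      (∫⁻ v : ℝ, (‖f ((u : ℂ) + (v : ℂ) * Complex.I)‖₊ : ℝ≥0∞) ^ p) ≤ S)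
    {r : ℝ} (hr : 0 < r) (c : ℂ) (hc : 2*r ≤ c.re) :
    ENNReal.ofReal (π * r^2 * ‖f c‖) ≤
      (ENNReal.ofReal (2*r) * S) ^ (1/p) *
        (ENNReal.ofReal (2*r) * ENNReal.ofReal (2*r)) ^ (1 - 1/p) := by
  have hπ := Real.pi_pos
  set HP : Set ℂ := {z : ℂ | 0 < z.re} with hHP
  set s : Set (ℝ × ℝ) := Ioo (0:ℝ) r ×ˢ Ioo (-π) π with hsdef
  have hs : MeasurableSet s := (measurableSet_Ioo.prod measurableSet_Ioo)
  set strip : Set (ℝ × ℝ) := Ioo (-r) r ×ˢ (univ : Set ℝ) with hstrip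
  have hstripm : MeasurableSet strip := measurableSet_Ioo.prod MeasurableSet.univ
  set g1 : ℝ × ℝ → ℝ≥0∞ := fun q => (‖f (c + q.1 + q.2 * Complex.I)‖₊ : ℝ≥0∞) with hg1
  -- membership in half plane
  have hmemstrip : ∀ q ∈ strip, (c + q.1 + q.2 * Complex.I) ∈ HP := by
    rintro ⟨x, y⟩ ⟨hx, -⟩
    simp only [hHP, mem_setOf_eq, Complex.add_re, Complex.ofReal_re, Complex.mul_re,
      Complex.I_re, Complex.I_im, Complex.ofReal_im]
    simp only [mem_Ioo] at hx
    nlinarith [hx.1, hx.2]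
  -- continuity of g1 on strip
  have hT : Continuous (fun q : ℝ × ℝ => c + (q.1 : ℂ) + (q.2 : ℂ) * Complex.I) := by
    fun_prop
  have hg1cont : AEMeasurable g1 (volume.restrict strip) := by
    have h1 : ContinuousOn (fun q : ℝ × ℝ => f (c + q.1 + q.2 * Complex.I)) strip :=
      hf.continuousOn.comp hT.continuousOn hmemstrip
    exact ((ENNReal.continuous_coe.comp continuous_nnnorm).comp_continuousOn h1).aemeasurable
      hstripm
  -- derivative data for polar coordinates
  set B : ℝ × ℝ → ℝ × ℝ →L[ℝ] ℝ × ℝ := fun q =>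
    LinearMap.toContinuousLinearMap (Matrix.toLin (Module.Basis.finTwoProd ℝ) (Module.Basis.finTwoProd ℝ)
      !![Real.cos q.2, -q.1 * Real.sin q.2; Real.sin q.2, q.1 * Real.cos q.2]) with hB
  have B_det : ∀ q, (B q).det = q.1 := by
    intro q
    conv_rhs => rw [← one_mul q.1, ← Real.cos_sq_add_sin_sq q.2]
    simp only [hB, neg_mul, LinearMap.det_toContinuousLinearMap, LinearMap.det_toLin,
      Matrix.det_fin_two_of, sub_neg_eq_add]
    ring
  have hder : ∀ q ∈ s, HasFDerivWithinAt polarCoord.symm (B q) s q := fun q _ =>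
    (hasFDerivAt_polarCoord_symm q).hasFDerivWithinAt
  have hsubt : s ⊆ polarCoord.target := by
    rw [show polarCoord.target = Set.Ioi (0:ℝ) ×ˢ Set.Ioo (-π) π from rfl]
    exact Set.prod_mono Ioo_subset_Ioi_self subset_rfl
  have hinj : InjOn polarCoord.symm s := by
    refine polarCoord.symm.injOn.mono ?_
    rwa [OpenPartialHomeomorph.symm_source]
  set A : Set (ℝ × ℝ) := polarCoord.symm '' s with hA
  have hAsub : A ⊆ Ioo (-r) r ×ˢ Ioo (-r) r := by
    rintro _ ⟨q, hq, rfl⟩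
    rw [show polarCoord.symm q = (q.1 * Real.cos q.2, q.1 * Real.sin q.2) from rfl]
    obtain ⟨hq1, -⟩ := hq
    simp only [mem_Ioo] at hq1
    have h1 : |q.1 * Real.cos q.2| < r := by
      calc |q.1 * Real.cos q.2| = |q.1| * |Real.cos q.2| := abs_mul _ _
        _ ≤ |q.1| * 1 := by gcongr; exact Real.abs_cos_le_one _
        _ < r := by rw [mul_one, abs_of_pos hq1.1]; exact hq1.2
    have h2 : |q.1 * Real.sin q.2| < r := by
      calc |q.1 * Real.sin q.2| = |q.1| * |Real.sin q.2| := abs_mul _ _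
        _ ≤ |q.1| * 1 := by gcongr; exact Real.abs_sin_le_one _
        _ < r := by rw [mul_one, abs_of_pos hq1.1]; exact hq1.2
    exact ⟨abs_lt.1 h1, abs_lt.1 h2⟩
  have hAstrip : A ⊆ strip := fun q hq =>
    ⟨(hAsub hq).1, mem_univ _⟩
  -- circleMap rewriting
  have hcm : ∀ q : ℝ × ℝ, c + (q.1 * Real.cos q.2 : ℝ) + (q.1 * Real.sin q.2 : ℝ) * Complex.I
      = circleMap c q.1 q.2 := by
    intro q
    simp only [circleMap, Complex.exp_mul_I]
    push_cast
    ring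
  -- change of variables
  have hchg : ∫⁻ x in A, g1 x = ∫⁻ q in s, ENNReal.ofReal |(B q).det| * g1 (polarCoord.symm q) :=
    lintegral_image_eq_lintegral_abs_det_fderiv_mul volume hs hder hinj g1
  -- half-plane membership for circle points
  have hcircmem : ∀ q : ℝ × ℝ, |q.1| < r → circleMap c q.1 q.2 ∈ HP := by
    intro q hq
    have h1 : |(circleMap c q.1 q.2 - c).re| ≤ |q.1| := by
      rw [circleMap_sub_center]
      exact le_trans (Complex.abs_re_le_norm _) (norm_circleMap_zero q.1 q.2).le
    have h2 : (circleMap c q.1 q.2).re = c.re + (circleMap c q.1 q.2 - c).re := by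
      rw [Complex.sub_re]; ring
    have := abs_le.1 h1
    simp only [hHP, mem_setOf_eq, h2]
    linarith [this.1]
  set F : ℝ × ℝ → ℝ≥0∞ :=
    fun q => ENNReal.ofReal q.1 * (‖f (circleMap c q.1 q.2)‖₊ : ℝ≥0∞) with hF
  have hFcongr : ∫⁻ q in s, ENNReal.ofReal |(B q).det| * g1 (polarCoord.symm q)
      = ∫⁻ q in s, F q := by
    refine setLIntegral_congr_fun hs (fun q hq => ?_)
    obtain ⟨hq1, -⟩ := hq
    simp only [mem_Ioo] at hq1
    rw [B_det, abs_of_pos hq1.1, hF, hg1,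
      show polarCoord.symm q = (q.1 * Real.cos q.2, q.1 * Real.sin q.2) from rfl]
    simp only []
    rw [hcm q]
  -- measurability of F
  have hcmcont : Continuous (fun q : ℝ × ℝ => circleMap c q.1 q.2) := by
    show Continuous fun q : ℝ × ℝ => c + (q.1 : ℂ) * Complex.exp ((q.2 : ℂ) * Complex.I)
    fun_prop
  have hFmeas : AEMeasurable F (volume.restrict s) := by
    have hmaps : ∀ q ∈ s, circleMap c q.1 q.2 ∈ HP := by
      intro q hq
      obtain ⟨hq1, -⟩ := hq
      simp only [mem_Ioo] at hq1
      exact hcircmem q (by rw [abs_of_pos hq1.1]; exact hq1.2)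
    have h1 : ContinuousOn (fun q : ℝ × ℝ => f (circleMap c q.1 q.2)) s :=
      hf.continuousOn.comp hcmcont.continuousOn hmaps
    exact ((ENNReal.measurable_ofReal.comp measurable_fst).aemeasurable).mul
      (((ENNReal.continuous_coe.comp continuous_nnnorm).comp_continuousOn h1).aemeasurable hs)
  -- Tonelli on s
  have tone1 : ∫⁻ q in s, F q = ∫⁻ R in Ioo (0:ℝ) r,
      ENNReal.ofReal R * ∫⁻ θ in Ioo (-π) π, (‖f (circleMap c R θ)‖₊ : ℝ≥0∞) := by
    have e : volume.restrict s
        = (volume.restrict (Ioo (0:ℝ) r)).prod (volume.restrict (Ioo (-π) π)) := by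
      rw [Measure.prod_restrict, ← Measure.volume_eq_prod, hsdef]
    rw [e] at hFmeas ⊢
    rw [lintegral_prod _ hFmeas]
    refine lintegral_congr fun R => ?_
    exact lintegral_const_mul' _ _ ENNReal.ofReal_ne_top
  -- lower bound
  have hint : ∫⁻ R in Ioo (0:ℝ) r, ENNReal.ofReal R = ENNReal.ofReal (r^2/2) := by
    have hInt : IntegrableOn (fun x : ℝ => x) (Ioo (0:ℝ) r) :=
      (continuous_id.integrableOn_Ioc).mono_set Ioo_subset_Ioc_self
    rw [← ofReal_integral_eq_lintegral_ofReal hInt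
      ((ae_restrict_iff' measurableSet_Ioo).2 (Filter.Eventually.of_forall
        fun x hx => hx.1.le))]
    congr 1
    rw [setIntegral_congr_set Ioo_ae_eq_Ioc, ← intervalIntegral.integral_of_le hr.le,
      integral_id]
    ring
  have lower : ENNReal.ofReal (π * r^2 * ‖f c‖) ≤ ∫⁻ q in s, F q := by
    rw [tone1]
    have heq : ENNReal.ofReal (π * r^2 * ‖f c‖)
        = ∫⁻ R in Ioo (0:ℝ) r, ENNReal.ofReal R * ENNReal.ofReal (2*π*‖f c‖) := by
      rw [lintegral_mul_const' _ _ ENNReal.ofReal_ne_top, hint, ← ENNReal.ofReal_mul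
        (by positivity)]
      congr 1
      ring
    rw [heq]
    refine lintegral_mono_ae ((ae_restrict_iff' measurableSet_Ioo).2
      (Filter.Eventually.of_forall fun R hR => ?_))
    refine mul_le_mul_right (circle_bound f hf hR.1 ?_) _
    intro z hz
    have h1 : |(z - c).re| ≤ R := by
      refine le_trans (Complex.abs_re_le_norm _) ?_
      rw [← Complex.dist_eq]
      exact mem_closedBall.1 hz
    have h2 : z.re = c.re + (z - c).re := by rw [Complex.sub_re]; ring
    have := abs_le.1 h1
    simp only [hHP, mem_setOf_eq, h2]
    have hRr : R < r := hR.2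
    linarith [this.1]
  -- upper bound via Hölder
  have hg1A : AEMeasurable g1 (volume.restrict A) :=
    hg1cont.mono_measure (Measure.restrict_mono hAstrip le_rfl)
  have holder := holder_one (volume.restrict A) hp1 hg1A
  have hp0 : (0:ℝ) < p := lt_of_lt_of_le one_pos hp1
  have hexp2 : (0:ℝ) ≤ 1 - 1/p := by
    have : 1/p ≤ 1 := by rw [div_le_one hp0]; exact hp1
    linarith
  have mrp : Measurable fun x : ℝ≥0∞ => x ^ p := (ENNReal.continuous_rpow_const).measurable
  have bound1 : ∫⁻ x in A, g1 x ^ p ≤ ENNReal.ofReal (2*r) * S := by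
    have h1 : ∫⁻ x in A, g1 x ^ p ≤ ∫⁻ x in strip, g1 x ^ p :=
      lintegral_mono' (Measure.restrict_mono hAstrip le_rfl) le_rfl
    have hg1p : AEMeasurable (fun q => g1 q ^ p) (volume.restrict strip) :=
      mrp.comp_aemeasurable hg1cont
    have e : volume.restrict strip
        = (volume.restrict (Ioo (-r) r)).prod (volume.restrict (univ : Set ℝ)) := by
      rw [Measure.prod_restrict, ← Measure.volume_eq_prod, hstrip]
    have tone2 : ∫⁻ x in strip, g1 x ^ p
        = ∫⁻ x in Ioo (-r) r, ∫⁻ y : ℝ, g1 (x, y) ^ p := by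
      rw [e] at hg1p ⊢
      rw [lintegral_prod _ hg1p]
      simp [Measure.restrict_univ]
    have inner_bound : ∀ x ∈ Ioo (-r) r, (∫⁻ y : ℝ, g1 (x, y) ^ p) ≤ S := by
      intro x hx
      simp only [mem_Ioo] at hx
      have hxre : (0:ℝ) < c.re + x := by linarith
      have e2 : ∀ y : ℝ, c + (x:ℂ) + (y:ℂ) * Complex.I
          = ((c.re + x : ℝ) : ℂ) + ((y + c.im : ℝ) : ℂ) * Complex.I := by
        intro y
        apply Complex.ext <;> simp [add_comm]
      set G : ℝ → ℝ≥0∞ :=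
        fun v => (‖f (((c.re + x : ℝ) : ℂ) + (v : ℂ) * Complex.I)‖₊ : ℝ≥0∞) ^ p with hGdef
      have e3 : (∫⁻ y : ℝ, g1 (x, y) ^ p) = ∫⁻ y : ℝ, G (y + c.im) := by
        refine lintegral_congr fun y => ?_
        rw [hg1, hGdef]
        simp only []
        rw [e2 y]
      rw [e3, lintegral_add_right_eq_self (μ := (volume : Measure ℝ)) G c.im]
      exact hline _ hxre
    have h2 : ∫⁻ x in Ioo (-r) r, (∫⁻ y : ℝ, g1 (x, y) ^ p)
        ≤ ∫⁻ _ in Ioo (-r) r, S := setLIntegral_mono measurable_const inner_bound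
    have h3 : ∫⁻ _ in Ioo (-r) r, S = ENNReal.ofReal (2*r) * S := by
      rw [setLIntegral_const, Real.volume_Ioo, show r - -r = 2*r by ring, mul_comm]
    calc ∫⁻ x in A, g1 x ^ p ≤ ∫⁻ x in strip, g1 x ^ p := h1
      _ = _ := tone2
      _ ≤ ∫⁻ _ in Ioo (-r) r, S := h2
      _ = _ := h3
  have bound2 : volume A ≤ ENNReal.ofReal (2*r) * ENNReal.ofReal (2*r) := by
    refine le_trans (measure_mono hAsub) ?_
    rw [Measure.volume_eq_prod, Measure.prod_prod, Real.volume_Ioo,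
      show r - -r = 2*r by ring]
  have upper : ∫⁻ x in A, g1 x
      ≤ (ENNReal.ofReal (2*r) * S) ^ (1/p)
        * (ENNReal.ofReal (2*r) * ENNReal.ofReal (2*r)) ^ (1 - 1/p) := by
    refine le_trans holder ?_
    rw [Measure.restrict_apply_univ]
    exact mul_le_mul' (ENNReal.rpow_le_rpow bound1 (by positivity))
      (ENNReal.rpow_le_rpow bound2 hexp2)
  calc ENNReal.ofReal (π * r^2 * ‖f c‖) ≤ ∫⁻ q in s, F q := lower
    _ = ∫⁻ q in s, ENNReal.ofReal |(B q).det| * g1 (polarCoord.symm q) := hFcongr.symm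
    _ = ∫⁻ x in A, g1 x := hchg.symm
    _ ≤ _ := upper


theorem Hp_shifted_is_H2 (p : ℝ) (hp1 : 1 ≤ p) (hp2 : p ≤ 2) (f : ℂ → ℂ)
    (hf : DifferentiableOn ℂ f {z : ℂ | 0 < z.re})
    (hsup : (⨆ u ∈ Set.Ioi (0 : ℝ),
        ∫⁻ v : ℝ, (‖f ((u : ℂ) + (v : ℂ) * Complex.I)‖₊ : ℝ≥0∞) ^ p) < ⊤) :
    ∀ ε : ℝ, 0 < ε →
      (⨆ u ∈ Set.Ioi (0 : ℝ),
        ∫⁻ v : ℝ, (‖f ((ε : ℂ) + ((u : ℂ) + (v : ℂ) * Complex.I))‖₊ : ℝ≥0∞) ^ 2) < ⊤ := by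
  intro ε hε
  have hπ := Real.pi_pos
  set S := (⨆ u ∈ Set.Ioi (0 : ℝ),
      ∫⁻ v : ℝ, (‖f ((u : ℂ) + (v : ℂ) * Complex.I)‖₊ : ℝ≥0∞) ^ p) with hSdef
  have hS : S ≠ ⊤ := hsup.ne
  have hline : ∀ u : ℝ, 0 < u →
      (∫⁻ v : ℝ, (‖f ((u : ℂ) + (v : ℂ) * Complex.I)‖₊ : ℝ≥0∞) ^ p) ≤ S := by
    intro u hu
    exact le_biSup (fun u : ℝ => ∫⁻ v : ℝ, (‖f ((u : ℂ) + (v : ℂ) * Complex.I)‖₊ : ℝ≥0∞) ^ p)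
      (Set.mem_Ioi.2 hu)
  set r : ℝ := ε/2 with hrdef
  have hr : 0 < r := by rw [hrdef]; linarith
  have hp0 : (0:ℝ) < p := lt_of_lt_of_le one_pos hp1
  have hexp2 : (0:ℝ) ≤ 1 - 1/p := by
    have : 1/p ≤ 1 := by rw [div_le_one hp0]; exact hp1
    linarith
  set K : ℝ≥0∞ := (ENNReal.ofReal (2*r) * S) ^ (1/p) *
      (ENNReal.ofReal (2*r) * ENNReal.ofReal (2*r)) ^ (1 - 1/p) with hKdef
  have hK : K ≠ ⊤ := by
    apply ENNReal.mul_ne_top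
    · exact ENNReal.rpow_ne_top_of_nonneg (by positivity)
        (ENNReal.mul_ne_top ENNReal.ofReal_ne_top hS)
    · exact ENNReal.rpow_ne_top_of_nonneg hexp2
        (ENNReal.mul_ne_top ENNReal.ofReal_ne_top ENNReal.ofReal_ne_top)
  set M : ℝ := K.toReal / (π * r^2) with hMdef
  have hM0 : 0 ≤ M := by positivity
  have key : ∀ c : ℂ, ε ≤ c.re → ‖f c‖ ≤ M := by
    intro c hcre
    have h1 := pointwise_bound p hp1 f hf S hline hr c (by rw [hrdef]; linarith)
    have h2 : π * r^2 * ‖f c‖ ≤ K.toReal := (ENNReal.ofReal_le_iff_le_toReal hK).1 h1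
    rw [hMdef, le_div_iff₀ (by positivity)]
    linarith
  have hMtop : ((ENNReal.ofReal M) ^ (2 - p)) ≠ ⊤ :=
    ENNReal.rpow_ne_top_of_nonneg (by linarith) ENNReal.ofReal_ne_top
  have hfin : (ENNReal.ofReal M) ^ (2 - p) * S < ⊤ :=
    ENNReal.mul_lt_top hMtop.lt_top hS.lt_top
  refine lt_of_le_of_lt (iSup₂_le fun u hu => ?_) hfin
  have hu' : (0:ℝ) < u := hu
  have hpt : ∀ v : ℝ, (‖f ((ε : ℂ) + ((u : ℂ) + (v : ℂ) * Complex.I))‖₊ : ℝ≥0∞) ^ 2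
      ≤ (ENNReal.ofReal M) ^ (2 - p)
        * (‖f ((ε : ℂ) + ((u : ℂ) + (v : ℂ) * Complex.I))‖₊ : ℝ≥0∞) ^ p := by
    intro v
    set x : ℝ≥0∞ := (‖f ((ε : ℂ) + ((u : ℂ) + (v : ℂ) * Complex.I))‖₊ : ℝ≥0∞) with hx
    have hxM : x ≤ ENNReal.ofReal M := by
      rw [hx, ← enorm_eq_nnnorm, ← ofReal_norm]
      refine ENNReal.ofReal_le_ofReal (key _ ?_)
      simp only [Complex.add_re, Complex.ofReal_re, Complex.mul_re, Complex.I_re,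
        Complex.I_im, Complex.ofReal_im]
      nlinarith [hu']
    have e1 : x ^ 2 = x ^ ((2:ℝ)) := by
      rw [show ((2:ℝ)) = ((2:ℕ):ℝ) by norm_num, ENNReal.rpow_natCast]
    have e2 : x ^ ((2:ℝ)) = x ^ (2 - p) * x ^ p := by
      rw [← ENNReal.rpow_add_of_nonneg (2-p) p (by linarith) (by linarith)]
      norm_num
    rw [e1, e2]
    exact mul_le_mul_left (ENNReal.rpow_le_rpow hxM (by linarith)) _
  have harg : ∀ v : ℝ, (ε : ℂ) + ((u : ℂ) + (v : ℂ) * Complex.I)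
      = ((ε + u : ℝ) : ℂ) + (v : ℂ) * Complex.I := by
    intro v; push_cast; ring
  calc ∫⁻ v : ℝ, (‖f ((ε : ℂ) + ((u : ℂ) + (v : ℂ) * Complex.I))‖₊ : ℝ≥0∞) ^ 2
      ≤ ∫⁻ v : ℝ, (ENNReal.ofReal M) ^ (2 - p)
          * (‖f ((ε : ℂ) + ((u : ℂ) + (v : ℂ) * Complex.I))‖₊ : ℝ≥0∞) ^ p :=
        lintegral_mono hpt
    _ = (ENNReal.ofReal M) ^ (2 - p)
          * ∫⁻ v : ℝ, (‖f ((ε : ℂ) + ((u : ℂ) + (v : ℂ) * Complex.I))‖₊ : ℝ≥0∞) ^ p :=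
        lintegral_const_mul' _ _ hMtop
    _ ≤ (ENNReal.ofReal M) ^ (2 - p) * S := by
        refine mul_le_mul_right ?_ _
        have : (∫⁻ v : ℝ, (‖f ((ε : ℂ) + ((u : ℂ) + (v : ℂ) * Complex.I))‖₊ : ℝ≥0∞) ^ p)
            = ∫⁻ v : ℝ, (‖f (((ε + u : ℝ) : ℂ) + (v : ℂ) * Complex.I)‖₊ : ℝ≥0∞) ^ p := by
          refine lintegral_congr fun v => ?_
          rw [harg v]
        rw [this]
        exact hline (ε + u) (by linarith [hu'])
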